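/- arXiv:1710.00118 — 2 statements merged into one kernel-verified Lean document; each statement's English description precedes it below -/
import Mathlib

section
/- A d-polytope (d ≥ 1) is k-neighborly for every k ≤ floor(d/2) + 1 only if it is a simplex; equivalently, no d-polytope other than the simplex is (floor(d/2)+1)-neighborly. -/
open Set

noncomputable section

abbrev Ept (n : ℕ) := EuclideanSpace ℝ (Fin n)

variable {V : Type*}

/-- A polytope: the convex hull of a finite set of points. -/
def IsPolytope [AddCommGroup V] [Module ℝ V] (P : Set V) : Prop :=
  ∃ S : Finset V, P = convexHull ℝ (S : Set V)

/-- The (affine) dimension of a set. -/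
def pdim [AddCommGroup V] [Module ℝ V] (F : Set V) : ℕ :=
  Module.finrank ℝ (vectorSpan ℝ F)

open scoped Classical in
/-- Rank of a face in the face lattice: the empty face has rank 0,
a k-dimensional face has rank k+1. -/
def frank [AddCommGroup V] [Module ℝ V] (F : Set V) : ℕ :=
  if F = ∅ then 0 else pdim F + 1

section TopDefs
variable [AddCommGroup V] [Module ℝ V] [TopologicalSpace V]
variable {W : Type*} [AddCommGroup W] [Module ℝ W] [TopologicalSpace W]

/-- The face lattice of `P`: all exposed faces (including `∅` and `P`), ordered by inclusion. -/
abbrev FaceLat (P : Set V) := {F : Set V // IsExposed ℝ P F}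

/-- Combinatorial equivalence: isomorphism of face lattices. -/
def CombEquiv (P : Set V) (Q : Set W) : Prop :=
  Nonempty (FaceLat P ≃o FaceLat Q)

/-- The k-skeleton of `P` as a poset: all faces of dimension at most `k`, ordered by inclusion. -/
abbrev kSkel (P : Set V) (k : ℕ) := {F : Set V // IsExposed ℝ P F ∧ pdim F ≤ k}

/-- k-equivalence: combinatorial equivalence of k-skeletons. -/
def kEquiv (P : Set V) (Q : Set W) (k : ℕ) : Prop :=
  Nonempty (kSkel P k ≃o kSkel Q k)

/-- The graph (1-skeleton) of a polytope: vertices are the exposed points,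
two vertices adjacent when the segment between them is a face. -/
def polyGraph (P : Set V) : SimpleGraph {x : V // IsExposed ℝ P {x}} where
  Adj u v := u ≠ v ∧ IsExposed ℝ P (segment ℝ u.1 v.1)
  symm := by
    constructor
    intro u v h
    exact ⟨h.1.symm, by rw [segment_symm]; exact h.2⟩
  loopless := by
    constructor
    intro u h
    exact h.1 rfl

/-- A simple `d`-polytope: every vertex lies on exactly `d` edges. -/
def IsSimplePolytope (P : Set V) (d : ℕ) : Prop :=
  IsPolytope P ∧ pdim P = d ∧
    ∀ x : V, IsExposed ℝ P {x} →
      {F : Set V | IsExposed ℝ P F ∧ pdim F = 1 ∧ x ∈ F}.ncard = d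

end TopDefs

/-- The `d`-dimensional crosspolytope `conv{±e₁, …, ±e_d}`. -/
def cross (d : ℕ) : Set (Ept d) :=
  convexHull ℝ
    {x | ∃ i : Fin d, x = EuclideanSpace.single i (1 : ℝ) ∨ x = -EuclideanSpace.single i (1 : ℝ)}


/-- `P` is `k`-neighborly: every `k` vertices form the vertex set of a `(k-1)`-face. -/
def kNeighborly {N : ℕ} (P : Set (Ept N)) (k : ℕ) : Prop :=
  ∀ S : Finset (Ept N), (∀ x ∈ S, IsExposed ℝ P {x}) → S.card = k →
    IsExposed ℝ P (convexHull ℝ (S : Set (Ept N))) ∧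
    pdim (convexHull ℝ (S : Set (Ept N))) = k - 1

lemma exists_mem_of_extreme {N : ℕ} {P F : Set (Ept N)} (hPconv : Convex ℝ P)
    (hF : IsExtreme ℝ P F)
    (B : Finset (Ept N)) (hBP : (B : Set (Ept N)) ⊆ P) {x : Ept N} (hxF : x ∈ F)
    (hx : x ∈ convexHull ℝ (B : Set (Ept N))) : ∃ b ∈ B, b ∈ F := by
  classical
  induction B using Finset.induction generalizing x with
  | empty => simp at hx
  | @insert a t ha ih =>
    rcases t.eq_empty_or_nonempty with rfl | htne
    · rw [show ((insert a ∅ : Finset (Ept N)) : Set (Ept N)) = {a} by simp,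
        convexHull_singleton, mem_singleton_iff] at hx
      exact ⟨a, by simp, hx ▸ hxF⟩
    · rw [Finset.coe_insert, convexHull_insert (by simpa using htne)] at hx
      rw [mem_convexJoin] at hx
      obtain ⟨a', ha', y, hy, hseg⟩ := hx
      rw [mem_singleton_iff] at ha'
      subst ha'
      by_cases hxa : x = a'
      · exact ⟨a', by simp, hxa ▸ hxF⟩
      by_cases hxy : x = y
      · obtain ⟨b, hb, hbF⟩ := ih (fun z hz => hBP (by simp at hz ⊢; exact Or.inr hz)) hxF
          (by rwa [← hxy] at hy)
        exact ⟨b, by simp [hb], hbF⟩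
      · have hopen : x ∈ openSegment ℝ a' y :=
          mem_openSegment_of_ne_left_right (Ne.symm hxa) (Ne.symm hxy) hseg
        have haP : a' ∈ P := hBP (by simp)
        have hyP : y ∈ P :=
          convexHull_min (fun z hz => hBP (by simp at hz ⊢; exact Or.inr hz)) hPconv hy
        exact ⟨a', by simp, hF.2 haP hyP hxF hopen⟩


/-- Every extreme point of a polytope is exposed. -/
lemma extreme_isExposed {N : ℕ} (S : Finset (Ept N)) {x : Ept N}
    (hx : x ∈ extremePoints ℝ (convexHull ℝ (S : Set (Ept N)))) :
    IsExposed ℝ (convexHull ℝ (S : Set (Ept N))) {x} := by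
  classical
  intro _
  have hxS : x ∈ S := extremePoints_convexHull_subset hx
  have hxP : x ∈ convexHull ℝ (S : Set (Ept N)) := hx.1
  set T : Finset (Ept N) := S.erase x with hT
  rcases T.eq_empty_or_nonempty with hTe | hTne
  · -- S = {x}
    have hS : (S : Set (Ept N)) = {x} := by
      apply Subset.antisymm
      · intro z hz
        by_contra hzx
        have : z ∈ T := Finset.mem_erase.2 ⟨by simpa using hzx, hz⟩
        simp [hTe] at this
      · simpa using hxS
    refine ⟨0, ?_⟩
    rw [hS, convexHull_singleton]
    ext z; simp
  · -- separate x from conv T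
    have hxT : x ∉ convexHull ℝ (T : Set (Ept N)) := by
      intro hmem
      have hsub : (T : Set (Ept N)) ⊆ (S : Set (Ept N)) := by
        intro z hz; exact Finset.erase_subset _ _ (by exact_mod_cast hz)
      have hx' : x ∈ extremePoints ℝ (convexHull ℝ (T : Set (Ept N))) := by
        rw [mem_extremePoints]
        refine ⟨hmem, fun x₁ h₁ x₂ h₂ hseg => ?_⟩
        exact (mem_extremePoints.1 hx).2 x₁ (convexHull_mono hsub h₁) x₂ (convexHull_mono hsub h₂) hseg
      have : x ∈ T := extremePoints_convexHull_subset hx'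
      simp [hT] at this
    obtain ⟨l, u, hlt, hux⟩ := geometric_hahn_banach_closed_point
      (convex_convexHull ℝ _) ((T.finite_toSet.isCompact_convexHull (𝕜 := ℝ)).isClosed) hxT
    refine ⟨l, ?_⟩
    have hmax : ∀ z ∈ convexHull ℝ (S : Set (Ept N)), l z ≤ l x := by
      intro z hz
      have : (S : Set (Ept N)) ⊆ {w | l w ≤ l x} := by
        intro s hs
        by_cases hsx : s = x
        · simp [hsx]
        · have hsT : s ∈ convexHull ℝ (T : Set (Ept N)) :=
            subset_convexHull ℝ _ (by exact_mod_cast Finset.mem_erase.2 ⟨hsx, by exact_mod_cast hs⟩)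
          exact le_of_lt (lt_trans (hlt _ hsT) hux)
      exact convexHull_min this (convex_halfSpace_le (l.toLinearMap.isLinear) _) hz
    ext z
    simp only [mem_singleton_iff, mem_setOf_eq]
    constructor
    · rintro rfl; exact ⟨hxP, hmax⟩
    · rintro ⟨hzP, hzmax⟩
      -- z maximizes l, and l z = l x
      have hlzx : l z = l x := le_antisymm (hmax z hzP) (hzmax x hxP)
      -- write z as segment point between x and conv T
      have hST : (S : Set (Ept N)) = insert x (T : Set (Ept N)) := by
        rw [hT, Finset.coe_erase, Set.insert_diff_singleton]
        exact (Set.insert_eq_self.2 (by exact_mod_cast hxS)).symm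
      rw [hST, convexHull_insert (by simpa using hTne), mem_convexJoin] at hzP
      obtain ⟨a, ha, y, hy, hseg⟩ := hzP
      rw [mem_singleton_iff] at ha
      obtain ⟨s, t, hs, ht, hst, hz⟩ := hseg
      have hly : l y < l x := lt_trans (hlt _ hy) hux
      have ht0 : t = 0 := by
        by_contra ht0
        have htpos : 0 < t := lt_of_le_of_ne ht (Ne.symm ht0)
        have hlz : l z = s * l x + t * l y := by
          rw [← hz, ha]; simp [map_add, map_smul]
        have hs' : s = 1 - t := by linarith
        rw [hs', hlzx] at hlz
        have key := mul_lt_mul_of_pos_left hly htpos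
        linarith [key, hlz]
      have hs1 : s = 1 := by linarith
      rw [← hz, ha, ht0, hs1]; simp


section MainAux
open Module

lemma vectorSpan_convexHull_eq {N : ℕ} (s : Set (Ept N)) :
    vectorSpan ℝ (convexHull ℝ s) = vectorSpan ℝ s := by
  rw [← direction_affineSpan, affineSpan_convexHull, direction_affineSpan]

/-- The key combinatorial step: one side of a Radon partition gives a contradiction. -/
lemma radon_side {N : ℕ} {d : ℕ} {P : Set (Ept N)} (hconv : Convex ℝ P)
    {T : Finset (Ept N)} (hTP : (T : Set (Ept N)) ⊆ P)
    (hText : (T : Set (Ept N)) ⊆ extremePoints ℝ P)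
    (hTexp : ∀ x ∈ T, IsExposed ℝ P {x})
    (hng : ∀ k, k ≤ d / 2 + 1 → ∀ S : Finset (Ept N),
      (∀ x ∈ S, IsExposed ℝ P {x}) → S.card = k →
      IsExposed ℝ P (convexHull ℝ (S : Set (Ept N))))
    (A B : Set {x // x ∈ T}) (hAB : Disjoint A B)
    (hx : ((convexHull ℝ ((fun i : {x // x ∈ T} => (i : Ept N)) '' A)) ∩
           (convexHull ℝ ((fun i : {x // x ∈ T} => (i : Ept N)) '' B))).Nonempty)
    (hcard : A.ncard ≤ d / 2 + 1) : False := by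
  classical
  obtain ⟨x, hxA, hxB⟩ := hx
  set f : {x // x ∈ T} → Ept N := fun i => (i : Ept N) with hf
  set A' : Finset (Ept N) := (A.toFinite.image f).toFinset with hA'
  set B' : Finset (Ept N) := (B.toFinite.image f).toFinset with hB'
  have hA'coe : (A' : Set (Ept N)) = f '' A := by
    rw [hA', Set.Finite.coe_toFinset]
  have hB'coe : (B' : Set (Ept N)) = f '' B := by
    rw [hB', Set.Finite.coe_toFinset]
  have hA'card : A'.card ≤ d / 2 + 1 := by
    have h1 : A'.card = (f '' A).ncard := by
      rw [← Set.ncard_coe_finset A', hA'coe]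
    calc A'.card = (f '' A).ncard := h1
    _ ≤ A.ncard := Set.ncard_image_le A.toFinite
    _ ≤ d / 2 + 1 := hcard
  have hA'exp : ∀ y ∈ A', IsExposed ℝ P {y} := by
    intro y hy
    have : y ∈ f '' A := by rw [← hA'coe]; exact_mod_cast hy
    obtain ⟨i, _, rfl⟩ := this
    exact hTexp _ i.2
  have hface : IsExposed ℝ P (convexHull ℝ (A' : Set (Ept N))) :=
    hng A'.card (by omega) A' hA'exp rfl
  have hB'P : (B' : Set (Ept N)) ⊆ P := by
    rw [hB'coe]
    rintro y ⟨i, _, rfl⟩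
    exact hTP i.2
  have hxF : x ∈ convexHull ℝ (A' : Set (Ept N)) := by rwa [hA'coe]
  obtain ⟨b, hbB', hbF⟩ := exists_mem_of_extreme hconv hface.isExtreme B' hB'P hxF
    (by rwa [hB'coe])
  -- b is an extreme point of P lying in convexHull A'
  have hbT : b ∈ (T : Set (Ept N)) := by
    have : b ∈ f '' B := by rw [← hB'coe]; exact_mod_cast hbB'
    obtain ⟨i, _, rfl⟩ := this
    exact i.2
  have hbext : b ∈ extremePoints ℝ P := hText hbT
  have hbextA' : b ∈ extremePoints ℝ (convexHull ℝ (A' : Set (Ept N))) := by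
    rw [mem_extremePoints]
    have hsubP : convexHull ℝ (A' : Set (Ept N)) ⊆ P := by
      apply convexHull_min _ hconv
      rw [hA'coe]; rintro y ⟨i, _, rfl⟩; exact hTP i.2
    exact ⟨hbF, fun x₁ h₁ x₂ h₂ hseg => (mem_extremePoints.1 hbext).2 x₁ (hsubP h₁) x₂ (hsubP h₂) hseg⟩
  have hbA' : b ∈ A' := by
    have := extremePoints_convexHull_subset hbextA'
    exact_mod_cast this
  -- contradiction with disjointness
  have hbA'' : b ∈ f '' A := by rw [← hA'coe]; exact_mod_cast hbA'
  have hbB'' : b ∈ f '' B := by rw [← hB'coe]; exact_mod_cast hbB'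
  obtain ⟨i, hiA, hib⟩ := hbA''
  obtain ⟨j, hjB, hjb⟩ := hbB''
  have hij : i = j := Subtype.val_injective (hib.trans hjb.symm)
  exact (hAB.ne_of_mem hiA hjB) hij

end MainAux

/-- a `d`-polytope that is `k`-neighborly for every `k ≤ ⌊d/2⌋ + 1`
must be a `d`-simplex. -/
theorem neighborly_beyond_half_is_simplex {N : ℕ} (d : ℕ) (hd : 1 ≤ d)
    (P : Set (Ept N)) (hP : IsPolytope P) (hdim : pdim P = d)
    (hng : ∀ k, k ≤ d / 2 + 1 → kNeighborly P k) :
    ∃ v : Fin (d + 1) → Ept N, AffineIndependent ℝ v ∧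
      P = convexHull ℝ (Set.range v) := by
  classical
  obtain ⟨S, hPS⟩ := hP
  have hconv : Convex ℝ P := hPS ▸ convex_convexHull ℝ _
  have hcomp : IsCompact P := hPS ▸ S.finite_toSet.isCompact_convexHull (𝕜 := ℝ)
  have hdim' : Module.finrank ℝ (vectorSpan ℝ P) = d := hdim
  have hEsub : extremePoints ℝ P ⊆ (S : Set (Ept N)) := by
    rw [hPS]; exact extremePoints_convexHull_subset
  have hEfin : (extremePoints ℝ P).Finite := S.finite_toSet.subset hEsub
  set Efin : Finset (Ept N) := hEfin.toFinset with hEdef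
  have hEcoe : (Efin : Set (Ept N)) = extremePoints ℝ P := hEfin.coe_toFinset
  have hPE : P = convexHull ℝ (Efin : Set (Ept N)) := by
    rw [hEcoe, ← (hEfin.isCompact_convexHull (𝕜 := ℝ)).isClosed.closure_eq,
      closure_convexHull_extremePoints hcomp hconv]
  have hexp : ∀ x ∈ Efin, IsExposed ℝ P {x} := by
    intro x hx
    rw [hEdef, Set.Finite.mem_toFinset] at hx
    rw [hPS] at hx ⊢
    exact extreme_isExposed S hx
  have hEP : (Efin : Set (Ept N)) ⊆ P := by
    rw [hEcoe]; exact extremePoints_subset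
  have hvs : vectorSpan ℝ (Efin : Set (Ept N)) = vectorSpan ℝ P := by
    rw [hPE, vectorSpan_convexHull_eq]
  -- cardinality bound via Radon
  have hcard_le : Efin.card ≤ d + 1 := by
    by_contra hgt
    push_neg at hgt
    obtain ⟨T, hTE, hTcard⟩ := Finset.exists_subset_card_eq (show d + 2 ≤ Efin.card by omega)
    have hTP : (T : Set (Ept N)) ⊆ P := fun z hz => hEP (Finset.coe_subset.2 hTE hz)
    have hText : (T : Set (Ept N)) ⊆ extremePoints ℝ P := by
      rw [← hEcoe]; exact Finset.coe_subset.2 hTE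
    have hTexp : ∀ x ∈ T, IsExposed ℝ P {x} := fun x hx => hexp x (hTE hx)
    set f : {x // x ∈ T} → Ept N := fun i => (i : Ept N) with hf
    have hnotAI : ¬ AffineIndependent ℝ f := by
      intro hAI
      have hc : Fintype.card {x // x ∈ T} = (d + 1) + 1 := by
        simp [hTcard]
      have hfr := hAI.finrank_vectorSpan hc
      have hsub : Set.range f ⊆ P := by rintro y ⟨i, rfl⟩; exact hTP i.2
      have hle : Module.finrank ℝ (vectorSpan ℝ (Set.range f)) ≤
          Module.finrank ℝ (vectorSpan ℝ P) :=
        Submodule.finrank_mono (vectorSpan_mono ℝ hsub)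
      omega
    obtain ⟨I, hI⟩ := Convex.radon_partition (𝕜 := ℝ) hnotAI
    have hsum : I.ncard + Iᶜ.ncard = d + 2 := by
      rw [Set.ncard_add_ncard_compl I (Set.toFinite I), Nat.card_eq_fintype_card]
      simp [hTcard]
    by_cases hIle : I.ncard ≤ d / 2 + 1
    · exact radon_side hconv hTP hText hTexp (fun k hk S' h1 h2 => (hng k hk S' h1 h2).1)
        I Iᶜ disjoint_compl_right hI hIle
    · refine radon_side hconv hTP hText hTexp (fun k hk S' h1 h2 => (hng k hk S' h1 h2).1)
        Iᶜ I disjoint_compl_left ?_ ?_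
      · obtain ⟨x, h1, h2⟩ := hI; exact ⟨x, h2, h1⟩
      · omega
  -- cardinality lower bound
  have hEne : Efin.Nonempty := by
    rcases Finset.eq_empty_or_nonempty Efin with h | h
    · exfalso
      rw [h] at hPE
      simp only [Finset.coe_empty, convexHull_empty] at hPE
      rw [hPE] at hdim'
      rw [vectorSpan_empty, finrank_bot] at hdim'
      omega
    · exact h
  have hcard_ge : d + 1 ≤ Efin.card := by
    by_contra hlt
    push_neg at hlt
    have hpos : 1 ≤ Efin.card := Finset.card_pos.2 hEne
    set g : {x // x ∈ Efin} → Ept N := fun i => (i : Ept N) with hg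
    have hc : Fintype.card {x // x ∈ Efin} = (Efin.card - 1) + 1 := by
      rw [Fintype.card_coe]; omega
    have hle := finrank_vectorSpan_range_le ℝ g hc
    have hrange : Set.range g = (Efin : Set (Ept N)) := Subtype.range_coe
    rw [hrange, hvs, hdim'] at hle
    omega
  have hcard : Efin.card = d + 1 := le_antisymm hcard_le hcard_ge
  -- build the simplex
  let e : {x // x ∈ Efin} ≃ Fin (d + 1) := Finset.equivFinOfCardEq hcard
  refine ⟨fun i => ((e.symm i : {x // x ∈ Efin}) : Ept N), ?_, ?_⟩
  · have hrange : Set.range (fun i : Fin (d+1) => ((e.symm i : {x // x ∈ Efin}) : Ept N))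
        = (Efin : Set (Ept N)) := by
      ext z
      constructor
      · rintro ⟨i, rfl⟩; exact (e.symm i).2
      · intro hz; exact ⟨e ⟨z, hz⟩, by simp⟩
    rw [affineIndependent_iff_finrank_vectorSpan_eq ℝ _ (n := d) (by simp)]
    rw [hrange, hvs, hdim']
  · have hrange : Set.range (fun i : Fin (d+1) => ((e.symm i : {x // x ∈ Efin}) : Ept N))
        = (Efin : Set (Ept N)) := by
      ext z
      constructor
      · rintro ⟨i, rfl⟩; exact (e.symm i).2
      · intro hz; exact ⟨e ⟨z, hz⟩, by simp⟩
    rw [hrange]; exact hPE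


end
end

section
/- The cyclic polytope C(d,n) with n > d ≥ 2 is floor(d/2)-neighborly: every set of at most floor(d/2) vertices spans a face. -/
open Set

noncomputable section

variable {V : Type*}

/-- The moment curve `t ↦ (t, t², …, t^d)` in `ℝ^d`. -/
def momentCurve (d : ℕ) (t : ℝ) : Fin d → ℝ := fun i => t ^ ((i : ℕ) + 1)

open Polynomial

section Aux

/-- Points on the moment curve with distinct parameters are affinely independent,
provided there are at most `d+1` of them. -/
theorem momentCurve_affineIndependent (d : ℕ) (S : Finset ℝ) (hcard : S.card ≤ d + 1) :
    AffineIndependent ℝ (fun s : ↥S => momentCurve d s) := by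
  classical
  rw [affineIndependent_iff]
  intro s w hw0 hw1 e he
  set w' : ↥S → ℝ := fun x => if x ∈ s then w x else 0 with hw'def
  have hsum : ∀ c : ↥S → ℝ, ∑ x : ↥S, w' x * c x = ∑ x ∈ s, w x * c x := by
    intro c
    rw [← Finset.sum_subset (Finset.subset_univ s)]
    · exact Finset.sum_congr rfl fun x hx => by simp [w', hx]
    · intro x _ hx; simp [w', hx]
  have hkey : ∀ m : ℕ, m ≤ d → ∑ x : ↥S, w' x * (x : ℝ) ^ m = 0 := by
    intro m hm
    rcases Nat.eq_zero_or_pos m with rfl | hmpos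
    · have h0 := hsum (fun x => (x : ℝ) ^ 0)
      simp only [pow_zero, mul_one] at h0 ⊢
      rw [h0]; exact hw0
    · obtain ⟨j, rfl⟩ := Nat.exists_eq_add_of_lt hmpos
      have hj : j < d := by omega
      have := congrFun hw1 ⟨j, hj⟩
      rw [Finset.sum_apply] at this
      simp only [Pi.smul_apply, smul_eq_mul, momentCurve] at this
      rw [hsum]
      simpa [add_comm 0 j, Nat.add_comm j 1] using this
  -- Vandermonde argument
  set k := S.card with hk
  set e' : Fin k ≃o ↥S := S.orderIsoOfFin rfl with he'
  have hinj : Function.Injective (fun i : Fin k => ((e' i : ↥S) : ℝ)) :=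
    Subtype.val_injective.comp (e'.toEquiv.injective)
  have hv : (fun i : Fin k => w' (e' i)) = 0 := by
    apply Matrix.eq_zero_of_forall_pow_sum_mul_pow_eq_zero hinj
    intro i
    have hle : (i : ℕ) ≤ d := by
      have : (i : ℕ) < k := i.2
      omega
    have := hkey i hle
    rw [← Equiv.sum_comp e'.toEquiv (fun x : ↥S => w' x * (x : ℝ) ^ (i : ℕ))] at this
    exact this
  have hw'0 : ∀ x : ↥S, w' x = 0 := by
    intro x
    have := congrFun hv (e'.symm x)
    simpa using this
  have := hw'0 e
  simpa [w', he] using this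

end Aux

/-- the cyclic polytope `C(d,n)` (with `n > d ≥ 2`) is
`⌊d/2⌋`-neighborly: every nonempty set of at most `⌊d/2⌋` vertices is the vertex set of
a face. -/
theorem cyclic_polytope_neighborly (d n : ℕ) (hd : 2 ≤ d) (hn : d < n)
    (t : Fin n → ℝ) (ht : StrictMono t) (S : Finset (Fin n))
    (hS : S.card ≤ d / 2) (hSne : S.Nonempty) :
    IsExposed ℝ (convexHull ℝ (Set.range fun i => momentCurve d (t i)))
      (convexHull ℝ ((fun i => momentCurve d (t i)) '' S)) ∧
    pdim (convexHull ℝ ((fun i => momentCurve d (t i)) '' S)) = S.card - 1 := by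
  classical
  have h2k : 2 * S.card ≤ d := by omega
  have hkpos : 1 ≤ S.card := hSne.card_pos
  set g : Fin n → (Fin d → ℝ) := fun i => momentCurve d (t i) with hgdef
  set q : ℝ[X] := (∏ i ∈ S, (X - C (t i))) ^ 2 with hqdef
  have hm : (∏ i ∈ S, (X - C (t i))).Monic :=
    monic_prod_of_monic _ _ fun i _ => monic_X_sub_C _
  have hqd : q.natDegree ≤ d := by
    rw [hqdef, hm.natDegree_pow, natDegree_prod_of_monic _ _ (fun i _ => monic_X_sub_C _)]
    simpa [natDegree_X_sub_C] using h2k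
  have hqeval : ∀ τ : ℝ, q.eval τ = (∏ i ∈ S, (τ - t i)) ^ 2 := by
    intro τ; simp [hqdef, eval_pow, eval_prod]
  set L : (Fin d → ℝ) →L[ℝ] ℝ :=
    ∑ j : Fin d, (-(q.coeff ((j : ℕ) + 1))) • (ContinuousLinearMap.proj j) with hLdef
  have hLapp : ∀ y : Fin d → ℝ, L y = ∑ j : Fin d, -(q.coeff ((j : ℕ) + 1)) * y j := by
    intro y
    rw [hLdef]
    simp [ContinuousLinearMap.sum_apply]
  set b : ℝ := q.coeff 0 with hbdef
  have hLg : ∀ τ : ℝ, L (momentCurve d τ) = b - q.eval τ := by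
    intro τ
    have h1 : q.eval τ = ∑ i ∈ Finset.range (d + 1), q.coeff i * τ ^ i :=
      eval_eq_sum_range' (Nat.lt_succ_of_le hqd) τ
    rw [Finset.sum_range_succ'] at h1
    rw [hLapp]
    have h2 : ∑ j : Fin d, -(q.coeff ((j : ℕ) + 1)) * momentCurve d τ j
        = -∑ i ∈ Finset.range d, q.coeff (i + 1) * τ ^ (i + 1) := by
      rw [← Fin.sum_univ_eq_sum_range (fun i => q.coeff (i + 1) * τ ^ (i + 1)) d, ← Finset.sum_neg_distrib]
      exact Finset.sum_congr rfl fun j _ => by simp [momentCurve]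
    rw [h2]
    rw [h1]; simp [hbdef]
  have hgL : ∀ i : Fin n, L (g i) = b - q.eval (t i) := fun i => hLg (t i)
  have hqnn : ∀ τ, 0 ≤ q.eval τ := fun τ => by rw [hqeval]; positivity
  have hq0 : ∀ i ∈ S, q.eval (t i) = 0 := by
    intro i hi
    rw [hqeval]
    have : ∏ j ∈ S, (t i - t j) = 0 := Finset.prod_eq_zero hi (by ring)
    rw [this]; ring
  have hqpos : ∀ i ∉ S, 0 < q.eval (t i) := by
    intro i hi
    rw [hqeval]
    have hne : ∏ j ∈ S, (t i - t j) ≠ 0 := by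
      rw [Finset.prod_ne_zero_iff]
      intro j hj
      refine sub_ne_zero_of_ne fun h => hi ?_
      rwa [ht.injective h]
    exact lt_of_le_of_ne (sq_nonneg _) (Ne.symm (pow_ne_zero 2 hne))
  have hub : ∀ i, L (g i) ≤ b := fun i => by rw [hgL]; linarith [hqnn (t i)]
  have hlin : IsLinearMap ℝ L := ⟨L.map_add, L.map_smul⟩
  set P := convexHull ℝ (Set.range g) with hPdef
  have hPle : ∀ x ∈ P, L x ≤ b := by
    intro x hx
    refine convexHull_min ?_ (convex_halfSpace_le hlin b) hx
    rintro y ⟨i, rfl⟩; exact hub i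
  have hSface : ∀ i ∈ S, L (g i) = b := fun i hi => by rw [hgL, hq0 i hi, sub_zero]
  set F := convexHull ℝ (g '' ↑S) with hFdef
  have hFP : F ⊆ P := convexHull_mono (Set.image_subset_range _ _)
  have hFb : ∀ x ∈ F, L x = b := by
    intro x hx
    refine convexHull_min ?_ (convex_hyperplane hlin b) hx
    rintro y ⟨i, hi, rfl⟩; exact hSface i hi
  obtain ⟨i₀, hi₀⟩ := hSne
  have hmain : F = {x ∈ P | ∀ y ∈ P, L y ≤ L x} := by
    ext x
    constructor
    · intro hx
      refine ⟨hFP hx, fun y hy => ?_⟩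
      rw [hFb x hx]; exact hPle y hy
    · rintro ⟨hxP, hmax⟩
      have hxb : L x = b := le_antisymm (hPle x hxP)
        (by rw [← hSface i₀ hi₀]
            exact hmax (g i₀) (subset_convexHull ℝ _ ⟨i₀, rfl⟩))
      obtain ⟨ι, hι, w, z, hw0, hw1, hz, hx⟩ := mem_convexHull_iff_exists_fintype.mp hxP
      choose σ hσ using hz
      have hzP : ∀ j, z j ∈ P := fun j => subset_convexHull ℝ _ ⟨σ j, hσ j⟩
      have hkey : ∀ j, σ j ∉ S → w j = 0 := by
        intro j hj
        by_contra hwj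
        have hwjpos : 0 < w j := (hw0 j).lt_of_ne (Ne.symm hwj)
        have hLx : L x = ∑ i, w i * L (z i) := by
          rw [← hx, map_sum]
          exact Finset.sum_congr rfl fun i _ => by simp
        have hsum : ∑ i, w i * (b - L (z i)) = 0 := by
          have : ∑ i, w i * (b - L (z i)) = (∑ i, w i) * b - ∑ i, w i * L (z i) := by
            rw [Finset.sum_mul, ← Finset.sum_sub_distrib]
            exact Finset.sum_congr rfl fun i _ => by ring
          rw [this, hw1, ← hLx, hxb]; ring
        have hterm : w j * (b - L (z j)) = 0 :=
          (Finset.sum_eq_zero_iff_of_nonneg fun i _ =>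
            mul_nonneg (hw0 i) (sub_nonneg.mpr (hPle _ (hzP i)))).mp hsum j (Finset.mem_univ j)
        have hlt : 0 < b - L (z j) := by
          rw [← hσ j, hgL]
          have := hqpos (σ j) hj
          linarith
        nlinarith
      refine mem_convexHull_of_exists_fintype w
        (fun j => if σ j ∈ S then z j else g i₀) hw0 hw1 ?_ ?_
      · intro j
        by_cases h : σ j ∈ S
        · simp only [if_pos h]
          exact ⟨σ j, h, hσ j⟩
        · simp only [if_neg h]
          exact ⟨i₀, hi₀, rfl⟩
      · rw [← hx]
        refine Finset.sum_congr rfl fun j _ => ?_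
        by_cases h : σ j ∈ S
        · simp [h]
        · simp [h, hkey j h]
  constructor
  · intro _
    exact ⟨L, hmain⟩
  · -- dimension
    have hvs : vectorSpan ℝ (convexHull ℝ (g '' ↑S)) = vectorSpan ℝ (g '' ↑S) := by
      rw [← direction_affineSpan, affineSpan_convexHull, direction_affineSpan]
    have him : g '' ↑S = Set.range (fun i : ↥S => g i) := Set.image_eq_range g ↑S
    set T : Finset ℝ := S.image t with hT
    have hTcard : T.card = S.card := Finset.card_image_of_injective S ht.injective
    have haffT : AffineIndependent ℝ (fun s : ↥T => momentCurve d s) :=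
      momentCurve_affineIndependent d T (by omega)
    have haff : AffineIndependent ℝ (fun i : ↥S => g i) := by
      have hmem : ∀ i : ↥S, t i.1 ∈ T := fun i => Finset.mem_image_of_mem t i.2
      have hcomp : (fun i : ↥S => g i) =
          (fun s : ↥T => momentCurve d s) ∘ (fun i : ↥S => (⟨t i.1, hmem i⟩ : ↥T)) := rfl
      rw [hcomp]
      apply haffT.comp_embedding ⟨fun i : ↥S => (⟨t i.1, hmem i⟩ : ↥T),
        fun i j hij => Subtype.ext (ht.injective (by simpa using hij))⟩
    show Module.finrank ℝ (vectorSpan ℝ (convexHull ℝ (g '' ↑S))) = S.card - 1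
    rw [hvs, him]
    exact haff.finrank_vectorSpan (by rw [Fintype.card_coe]; omega)


end
end
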